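/- Soundness of the specification for n-queens solutions: suppose cs is an open list of length exactly n > 0 whose ground members are exactly 1,…,n, such that the up diagonal numbers kₐ + jₐ and the down diagonal numbers kₐ − jₐ (where queen jₐ is the kₐ-th member) are each pairwise distinct. Then any ground instance of cs that is a list of length n is a permutation of [1,…,n] in which no two entries share a row, column, up diagonal, or down diagonal, i.e., for all a ≠ b: jₐ ≠ j_b, kₐ ≠ k_b, kₐ + jₐ ≠ k_b + j_b, and kₐ − jₐ ≠ k_b − j_b — a solution to the n-queens problem. -/

import Mathlib

/-- Terms: variables, number constants, and list constructors. -/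
inductive Tm : Type
  | var : ℕ → Tm
  | const : ℕ → Tm
  | nil : Tm
  | cons : Tm → Tm → Tm
deriving DecidableEq

/-- The set of variables of a term. -/
def Tm.vars : Tm → Finset ℕ
  | .var x => {x}
  | .const _ => ∅
  | .nil => ∅
  | .cons s t => s.vars ∪ t.vars

/-- A term is ground if it has no variables. -/
def Tm.Ground (t : Tm) : Prop := t.vars = ∅

/-- Boolean groundness test. -/
def Tm.groundB : Tm → Bool
  | .var _ => false
  | .const _ => true
  | .nil => true
  | .cons s t => s.groundB && t.groundB

/-- Applying a substitution to a term. -/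
def Tm.subst (σ : ℕ → Tm) : Tm → Tm
  | .var x => σ x
  | .const c => .const c
  | .nil => .nil
  | .cons s t => .cons (s.subst σ) (t.subst σ)

/-- The open list `[t₁,…,tₙ|v]` with members `ts` and open-list variable `v`. -/
def mkOpen (ts : List Tm) (v : ℕ) : Tm := ts.foldr .cons (.var v)

/-- The (closed) list `[t₁,…,tₙ]` with members `ts`. -/
def mkList (ts : List Tm) : Tm := ts.foldr .cons .nil

/-- `(ts, v)` describes a g.v.d. (a linear open list with pairwise distinct
    members, each member ground or a variable). -/
def IsGVD (ts : List Tm) (v : ℕ) : Prop :=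
  (∀ t ∈ ts, t.Ground ∨ ∃ x, t = .var x) ∧
  ts.Nodup ∧
  (ts.map Tm.vars).Pairwise Disjoint ∧
  ∀ t ∈ ts, v ∉ t.vars

/-- `θ` unifies `s` and `t`. -/
def IsUnifier (s t : Tm) (θ : ℕ → Tm) : Prop := s.subst θ = t.subst θ

/-- `θ` is a most general unifier of `s` and `t`. -/
def IsMGU (s t : Tm) (θ : ℕ → Tm) : Prop :=
  IsUnifier s t θ ∧ ∀ σ, IsUnifier s t σ → ∃ δ, ∀ x, σ x = (θ x).subst δ

/-- `s` is the `k`-th member (1-based) of the term `t`,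
    i.e. `t = [t₁,…,t_{k-1},s|t₀]`. -/
inductive KthMem : Tm → ℕ → Tm → Prop
  | head (s t : Tm) : KthMem (.cons s t) 1 s
  | tail {t : Tm} {k : ℕ} {s : Tm} (a : Tm) : KthMem t k s → KthMem (.cons a t) (k + 1) s

/-- The open list `cs` represents a correct placement up to row `m`:
    it is a g.v.d., its ground members are exactly the queens `1,…,m`
    (represented as `const j`), and their up diagonal numbers `k + j - i`
    and down diagonal numbers `k + i - j` (w.r.t. any reference row `i`;
    distinctness does not depend on `i`) are respectively pairwise
    distinct. -/
def CorrectUpTo (cs : Tm) (m : ℕ) : Prop :=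
  (∃ ts v, cs = mkOpen ts v ∧ IsGVD ts v) ∧
  (∀ j : ℕ, 1 ≤ j → j ≤ m → ∃ k, KthMem cs k (.const j)) ∧
  (∀ k : ℕ, ∀ s : Tm, KthMem cs k s → s.Ground →
      ∃ j : ℕ, 1 ≤ j ∧ j ≤ m ∧ s = .const j) ∧
  (∀ j j' k k' : ℕ, KthMem cs k (.const j) → KthMem cs k' (.const j') →
      j ≠ j' → k + j ≠ k' + j' ∧ (k : ℤ) - j ≠ (k' : ℤ) - j')

/-- The pair `(us, ds)` is correct up to `m` w.r.t. the row `i` and `cs`: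
    each queen `j ∈ {1,…,m}` is a member of `cs`, and whenever its up
    (resp. down) diagonal number `l` in `cs` w.r.t. `i` is positive, the
    `l`-th member of `us` (resp. `ds`) is `j`. -/
def PairCorrect (us ds : Tm) (m i : ℕ) (cs : Tm) : Prop :=
  ∀ j : ℕ, 1 ≤ j → j ≤ m →
    (∃ k, KthMem cs k (.const j)) ∧
    ∀ k : ℕ, KthMem cs k (.const j) →
      (∀ l : ℕ, (l : ℤ) = (k : ℤ) + j - i → 0 < l → KthMem us l (.const j)) ∧
      (∀ l : ℕ, (l : ℤ) = (k : ℤ) + i - j → 0 < l → KthMem ds l (.const j))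

/-! The `n` queens `1,…,n` all occur among the `n` members of `cs`, so by pigeonhole the members
are exactly `const 1,…,const n` in some order. Constants are fixed by every substitution, so the
ground instance is `cs` with its tail closed off, and the distinct-diagonal clause of `CorrectUpTo`
is then literally the non-attacking condition. -/

namespace Tm

def num : Tm → ℕ
  | .const c => c
  | _ => 0

@[simp] lemma num_const (c : ℕ) : (Tm.const c).num = c := rfl

lemma foldr_cons_inj {l₁ l₂ : List Tm} {t₁ t₂ : Tm} (hlen : l₁.length = l₂.length) :
    l₁.foldr .cons t₁ = l₂.foldr .cons t₂ ↔ l₁ = l₂ ∧ t₁ = t₂ := by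
  induction l₁ generalizing l₂ with
  | nil => cases l₂ <;> simp_all
  | cons a l₁ ih => cases l₂ <;> simp_all [and_assoc]

end Tm

lemma subst_mkOpen (ts : List Tm) (v : ℕ) (θ : ℕ → Tm) :
    (mkOpen ts v).subst θ = (ts.map (Tm.subst θ)).foldr .cons (θ v) := by
  induction ts with
  | nil => rfl
  | cons a ts ih => simpa [mkOpen, Tm.subst] using ih

lemma mem_of_kthMem_mkOpen {ts : List Tm} {v k : ℕ} {s : Tm} (h : KthMem (mkOpen ts v) k s) :
    s ∈ ts := by
  induction ts generalizing k with
  | nil => cases h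
  | cons a ts ih =>
    cases h with
    | head => exact List.mem_cons_self
    | tail _ h => exact List.mem_cons_of_mem a (ih h)

lemma kthMem_mkOpen_getElem (ts : List Tm) (v : ℕ) {i : ℕ} (hi : i < ts.length) :
    KthMem (mkOpen ts v) (i + 1) ts[i] := by
  induction ts generalizing i with
  | nil => simp at hi
  | cons a ts ih =>
    cases i with
    | zero => exact .head _ _
    | succ i => exact .tail a (ih (by simpa using hi))

lemma perm_range'_of_forall_kthMem {ts : List Tm} {v n : ℕ} (hlen : ts.length = n)
    (hall : ∀ j : ℕ, 1 ≤ j → j ≤ n → ∃ k, KthMem (mkOpen ts v) k (.const j)) :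
    ts.Perm ((List.range' 1 n).map .const) := by
  have hsub : (List.range' 1 n).map Tm.const ⊆ ts := by
    intro t ht
    obtain ⟨j, hj, rfl⟩ := List.mem_map.1 ht
    obtain ⟨hj1, hjn⟩ : 1 ≤ j ∧ j < 1 + n := List.mem_range'_1.1 hj
    obtain ⟨k, hk⟩ := hall j hj1 (by omega)
    exact mem_of_kthMem_mkOpen hk
  have hnodup : ((List.range' 1 n).map Tm.const).Nodup :=
    (List.nodup_range' ..).map fun _ _ => Tm.const.inj
  exact ((hnodup.subperm hsub).perm_of_length_le (by simp [hlen])).symm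

lemma exists_eq_map_const_of_perm {ts : List Tm} {l : List ℕ}
    (h : ts.Perm (l.map .const)) : ∃ q : List ℕ, ts = q.map .const ∧ q.Perm l := by
  refine ⟨ts.map Tm.num, ?_, by simpa [Function.comp_def] using h.map Tm.num⟩
  rw [List.map_map, List.map_congr_left fun t ht => ?_, List.map_id]
  obtain ⟨j, -, rfl⟩ := List.mem_map.1 (h.subset ht)
  rfl

lemma eq_of_subst_mkOpen_map_const {q : List ℕ} {us : List Tm} {v : ℕ} {θ : ℕ → Tm}
    (hlen : q.length = us.length) (h : (mkOpen (q.map .const) v).subst θ = mkList us) :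
    us = q.map .const := by
  rw [subst_mkOpen, List.map_map] at h
  exact ((Tm.foldr_cons_inj (by simpa using hlen)).1 h).1.symm

lemma kthMem_mkOpen_map_const (q : List ℕ) (v : ℕ) {a : ℕ} (ha : a < q.length) :
    KthMem (mkOpen (q.map .const) v) (a + 1) (.const (q.getD a 0)) := by
  have h := kthMem_mkOpen_getElem (q.map .const) v (by simpa using ha)
  rwa [List.getElem_map, ← List.getD_eq_getElem q 0 ha] at h

theorem spec_sound_nqueens_general (ts : List Tm) (v : ℕ) (n : ℕ)
    (hlen : ts.length = n) (hc : CorrectUpTo (mkOpen ts v) n)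
    (θ : ℕ → Tm) (us : List Tm) (hinst : (mkOpen ts v).subst θ = mkList us)
    (huslen : us.length = n) :
    ∃ q : List ℕ, us = q.map Tm.const ∧ q.Perm (List.range' 1 n) ∧
      ∀ a b : ℕ, a < n → b < n → a ≠ b →
        q.getD a 0 ≠ q.getD b 0 ∧
        (a + 1) + q.getD a 0 ≠ (b + 1) + q.getD b 0 ∧
        ((a : ℤ) + 1) - q.getD a 0 ≠ ((b : ℤ) + 1) - q.getD b 0 := by
  obtain ⟨-, hall, -, hdiag⟩ := hc
  obtain ⟨q, rfl, hq⟩ := exists_eq_map_const_of_perm (perm_range'_of_forall_kthMem hlen hall)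
  have hqlen : q.length = n := by simpa using hlen
  have hnodup : q.Nodup := hq.nodup_iff.2 (List.nodup_range' ..)
  refine ⟨q, eq_of_subst_mkOpen_map_const (hqlen.trans huslen.symm) hinst, hq,
    fun a b ha hb hab => ?_⟩
  have hrow : q.getD a 0 ≠ q.getD b 0 := by
    rw [List.getD_eq_getElem _ _ (by omega), List.getD_eq_getElem _ _ (by omega)]
    exact fun h => hab ((hnodup.getElem_inj_iff).1 h)
  obtain ⟨hup, hdown⟩ := hdiag _ _ _ _ (kthMem_mkOpen_map_const q v (by omega))
    (kthMem_mkOpen_map_const q v (by omega)) hrow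
  exact ⟨hrow, hup, by push_cast at hdown; exact hdown⟩

/-- soundness of the specification: if `cs` is an open list of
    length exactly `n > 0` which is correct up to `n` (ground members exactly
    `1,…,n` with pairwise distinct up and down diagonal numbers), then any
    ground instance of `cs` that is a list of length `n` is a permutation
    `q` of `[1,…,n]` such that no two queens share a row, column, or
    diagonal: for columns `a ≠ b` (0-based here, so column numbers are
    `a+1`, `b+1`), the rows, up diagonal numbers and down diagonal numbers
    differ — a solution to the `n` queens problem. -/
theorem spec_sound_nqueens (ts : List Tm) (v : ℕ) (n : ℕ) (hn : 0 < n)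
    (hlen : ts.length = n) (hc : CorrectUpTo (mkOpen ts v) n)
    (θ : ℕ → Tm) (us : List Tm) (hinst : (mkOpen ts v).subst θ = mkList us)
    (huslen : us.length = n) (hground : (mkList us).Ground) :
    ∃ q : List ℕ, us = q.map Tm.const ∧ q.Perm (List.range' 1 n) ∧
      ∀ a b : ℕ, a < n → b < n → a ≠ b →
        q.getD a 0 ≠ q.getD b 0 ∧
        (a + 1) + q.getD a 0 ≠ (b + 1) + q.getD b 0 ∧
        ((a : ℤ) + 1) - q.getD a 0 ≠ ((b : ℤ) + 1) - q.getD b 0 :=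
  spec_sound_nqueens_general ts v n hlen hc θ us hinst huslen
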